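/- (Gaussian constant-speed geodesic.) Let m_0, m_1 ∈ ℝ and σ_0, σ_1 > 0, and for t ∈ [0,1] let μ_t = N(m_t, σ_t) with m_t = (1−t)m_0 + t·m_1 and σ_t = (1 + t(√(σ_1/σ_0) − 1))^2 · σ_0. Then for all 0 ≤ s ≤ t ≤ 1, W_2(μ_s, μ_t) = (t − s)·W_2(μ_0, μ_1), where W_2 denotes the 2-Wasserstein distance; in particular W_2(μ_s, μ_t)^2 = (t−s)^2·((m_0 − m_1)^2 + (√σ_0 − √σ_1)^2). -/

import Mathlib

/-!
For any coupling `(X, Y)` of two laws with finite second moments,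
`E(X - Y)² = (EX - EY)² + Var X + Var Y - 2 Cov(X, Y)`, and Cauchy–Schwarz
`Cov(X, Y) ≤ √Var X √Var Y` gives `E(X - Y)² ≥ (m - m')² + (√v - √v')²`. For Gaussians this
bound is attained by the comonotone coupling `z ↦ (m + √v z, m' + √v' z)` of a standard normal
`z`, so `W₂²(N(m, v), N(m', v')) = (m - m')² + (√v - √v')²`. Along the curve `μ_t` both the mean
and the standard deviation `(1 - t)√σ₀ + t√σ₁` are affine in `t`, which gives the constant speed.
-/

open MeasureTheory ENNReal NNReal ProbabilityTheory

noncomputable section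

variable {E : Type*} [NormedAddCommGroup E] [MeasurableSpace E]

/-- The set Π(μ,ν) of couplings of `μ` and `ν`: measures on the product whose
first marginal is `μ` and second marginal is `ν`. -/
def couplings (μ ν : Measure E) : Set (Measure (E × E)) :=
  {γ | γ.map Prod.fst = μ ∧ γ.map Prod.snd = ν}

/-- The Kantorovich transport cost `∫ ‖x - y‖^p dγ(x,y)`. -/
def transportCost (p : ℝ) (γ : Measure (E × E)) : ℝ≥0∞ :=
  ∫⁻ z, (‖z.1 - z.2‖₊ : ℝ≥0∞) ^ p ∂γ

/-- `W_p(μ,ν)^p = inf_{γ ∈ Π(μ,ν)} ∫ ‖x-y‖^p dγ`. -/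
def wassersteinPow (p : ℝ) (μ ν : Measure E) : ℝ≥0∞ :=
  ⨅ γ ∈ couplings μ ν, transportCost p γ

/-- The `p`-Wasserstein distance `W_p(μ,ν)`. -/
def wasserstein (p : ℝ) (μ ν : Measure E) : ℝ≥0∞ :=
  wassersteinPow p μ ν ^ (1 / p)

/-- Membership in the Wasserstein space `P_p`: a Borel probability measure with
finite `p`-th moment. -/
def MemPp (p : ℝ) (μ : Measure E) : Prop :=
  IsProbabilityMeasure μ ∧ ∫⁻ x, (‖x‖₊ : ℝ≥0∞) ^ p ∂μ < ∞

open Real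

namespace ProbabilityTheory

section SecondMoments

variable {Ω : Type*} {mΩ : MeasurableSpace Ω} {μ : Measure Ω} {X Y : Ω → ℝ}

lemma covariance_le_sqrt_variance_mul_sqrt_variance [IsFiniteMeasure μ]
    (hX : MemLp X 2 μ) (hY : MemLp Y 2 μ) :
    cov[X, Y; μ] ≤ √Var[X; μ] * √Var[Y; μ] := by
  have hquad : ∀ x : ℝ, 0 ≤ Var[X; μ] * (x * x) + (-2 * cov[X, Y; μ]) * x + Var[Y; μ] := by
    intro x
    have h := variance_nonneg (fun ω ↦ x * X ω - Y ω) μ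
    rw [variance_fun_sub (hX.const_mul x) hY, variance_const_mul,
      covariance_const_mul_left] at h
    linarith
  have hdiscrim : cov[X, Y; μ] ^ 2 ≤ Var[X; μ] * Var[Y; μ] := by
    have := discrim_le_zero hquad
    rw [discrim] at this
    linarith
  calc cov[X, Y; μ] ≤ √(cov[X, Y; μ] ^ 2) := by rw [sqrt_sq_eq_abs]; exact le_abs_self _
    _ ≤ √(Var[X; μ] * Var[Y; μ]) := sqrt_le_sqrt hdiscrim
    _ = √Var[X; μ] * √Var[Y; μ] := sqrt_mul (variance_nonneg X μ) _

lemma sq_sqrt_variance_sub_sqrt_variance_le [IsFiniteMeasure μ]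
    (hX : MemLp X 2 μ) (hY : MemLp Y 2 μ) :
    (√Var[X; μ] - √Var[Y; μ]) ^ 2 ≤ Var[X - Y; μ] := by
  rw [variance_sub hX hY]
  nlinarith [covariance_le_sqrt_variance_mul_sqrt_variance hX hY,
    sq_sqrt (variance_nonneg X μ), sq_sqrt (variance_nonneg Y μ)]

lemma integral_sq_eq_sq_integral_add_variance [IsProbabilityMeasure μ] (hX : MemLp X 2 μ) :
    μ[X ^ 2] = μ[X] ^ 2 + Var[X; μ] := by
  rw [variance_eq_sub hX]
  ring

lemma sq_integral_sub_add_sq_sqrt_variance_sub_le [IsProbabilityMeasure μ]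
    (hX : MemLp X 2 μ) (hY : MemLp Y 2 μ) :
    (μ[X] - μ[Y]) ^ 2 + (√Var[X; μ] - √Var[Y; μ]) ^ 2 ≤ μ[(X - Y) ^ 2] := by
  rw [integral_sq_eq_sq_integral_add_variance (hX.sub hY),
    integral_sub' (hX.integrable one_le_two) (hY.integrable one_le_two)]
  linarith [sq_sqrt_variance_sub_sqrt_variance_le hX hY]

end SecondMoments

lemma integral_sq_gaussianReal (m : ℝ) (v : ℝ≥0) : ∫ x, x ^ 2 ∂gaussianReal m v = m ^ 2 + v := by
  simpa using integral_sq_eq_sq_integral_add_variance (memLp_id_gaussianReal (μ := m) (v := v) 2)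

lemma gaussianReal_map_const_add_const_mul (m a b : ℝ) (v : ℝ≥0) :
    (gaussianReal m v).map (fun x ↦ a + b * x) =
      gaussianReal (a + b * m) (.mk (b ^ 2) (sq_nonneg b) * v) := by
  rw [show (fun x ↦ a + b * x) = (a + ·) ∘ (b * ·) from rfl,
    ← Measure.map_map (measurable_const_add a) (measurable_const_mul b),
    gaussianReal_map_const_mul, gaussianReal_map_const_add, add_comm]

end ProbabilityTheory

lemma transportCost_two_eq_lintegral (γ : Measure (ℝ × ℝ)) :
    transportCost 2 γ = ∫⁻ z, ENNReal.ofReal ((z.1 - z.2) ^ 2) ∂γ := by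
  refine lintegral_congr fun z ↦ ?_
  rw [ENNReal.rpow_two, ← enorm_eq_nnnorm, ← ofReal_norm,
    ← ENNReal.ofReal_pow (norm_nonneg _), Real.norm_eq_abs, sq_abs]

lemma le_transportCost_of_mem_couplings {μ ν : Measure ℝ} [IsProbabilityMeasure μ]
    (hμ : MemLp id 2 μ) (hν : MemLp id 2 ν) {γ : Measure (ℝ × ℝ)} (hγ : γ ∈ couplings μ ν) :
    ENNReal.ofReal ((μ[id] - ν[id]) ^ 2 + (√Var[id; μ] - √Var[id; ν]) ^ 2) ≤
      transportCost 2 γ := by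
  obtain ⟨hfst, hsnd⟩ := hγ
  subst hfst hsnd
  have := Measure.isProbabilityMeasure_of_map (μ := γ) Prod.fst
  have hX : MemLp Prod.fst 2 γ :=
    (memLp_map_measure_iff aestronglyMeasurable_id measurable_fst.aemeasurable).1 hμ
  have hY : MemLp Prod.snd 2 γ :=
    (memLp_map_measure_iff aestronglyMeasurable_id measurable_snd.aemeasurable).1 hν
  rw [variance_id_map measurable_fst.aemeasurable, variance_id_map measurable_snd.aemeasurable,
    integral_map measurable_fst.aemeasurable aestronglyMeasurable_id,
    integral_map measurable_snd.aemeasurable aestronglyMeasurable_id,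
    transportCost_two_eq_lintegral,
    ← ofReal_integral_eq_lintegral_ofReal (f := fun z : ℝ × ℝ ↦ (z.1 - z.2) ^ 2)
      (hX.sub hY).integrable_sq (ae_of_all _ fun z ↦ sq_nonneg _)]
  exact ENNReal.ofReal_le_ofReal (sq_integral_sub_add_sq_sqrt_variance_sub_le hX hY)

def gaussianCoupling (m m' : ℝ) (v v' : ℝ≥0) : Measure (ℝ × ℝ) :=
  (gaussianReal 0 1).map fun z ↦ (m + √(v : ℝ) * z, m' + √(v' : ℝ) * z)

lemma gaussianReal_zero_one_map_const_add_sqrt_mul (m : ℝ) (v : ℝ≥0) :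
    (gaussianReal 0 1).map (fun z ↦ m + √(v : ℝ) * z) = gaussianReal m v := by
  rw [gaussianReal_map_const_add_const_mul, mul_zero, add_zero, mul_one]
  congr
  exact Real.sq_sqrt v.coe_nonneg

lemma gaussianCoupling_mem_couplings (m m' : ℝ) (v v' : ℝ≥0) :
    gaussianCoupling m m' v v' ∈ couplings (gaussianReal m v) (gaussianReal m' v') := by
  constructor <;> rw [gaussianCoupling, Measure.map_map (by fun_prop) (by fun_prop)]
  · exact gaussianReal_zero_one_map_const_add_sqrt_mul m v
  · exact gaussianReal_zero_one_map_const_add_sqrt_mul m' v'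

lemma transportCost_gaussianCoupling (m m' : ℝ) (v v' : ℝ≥0) :
    transportCost 2 (gaussianCoupling m m' v v') =
      ENNReal.ofReal ((m - m') ^ 2 + (√(v : ℝ) - √(v' : ℝ)) ^ 2) := by
  have hdiff : ∀ z : ℝ, m + √(v : ℝ) * z - (m' + √(v' : ℝ) * z) =
      (m - m') + (√(v : ℝ) - √(v' : ℝ)) * z := fun z ↦ by ring
  rw [transportCost_two_eq_lintegral, gaussianCoupling, lintegral_map (by fun_prop) (by fun_prop)]
  simp_rw [hdiff]
  rw [← lintegral_map (f := fun x ↦ ENNReal.ofReal (x ^ 2)) (by fun_prop) (by fun_prop),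
    gaussianReal_map_const_add_const_mul, mul_zero, add_zero, mul_one,
    ← ofReal_integral_eq_lintegral_ofReal (f := fun x : ℝ ↦ x ^ 2)
      (memLp_id_gaussianReal 2).integrable_sq (ae_of_all _ fun x ↦ sq_nonneg _),
    integral_sq_gaussianReal]
  simp

theorem wassersteinPow_two_gaussianReal (m m' : ℝ) (v v' : ℝ≥0) :
    wassersteinPow 2 (gaussianReal m v) (gaussianReal m' v') =
      ENNReal.ofReal ((m - m') ^ 2 + (√(v : ℝ) - √(v' : ℝ)) ^ 2) := by
  refine le_antisymm ?_ (le_iInf₂ fun γ hγ ↦ ?_)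
  · rw [← transportCost_gaussianCoupling]
    exact iInf₂_le _ (gaussianCoupling_mem_couplings m m' v v')
  · simpa using le_transportCost_of_mem_couplings (memLp_id_gaussianReal 2)
      (memLp_id_gaussianReal 2) hγ

theorem wasserstein_two_gaussianReal (m m' : ℝ) (v v' : ℝ≥0) :
    wasserstein 2 (gaussianReal m v) (gaussianReal m' v') =
      ENNReal.ofReal √((m - m') ^ 2 + (√(v : ℝ) - √(v' : ℝ)) ^ 2) := by
  rw [wasserstein, wassersteinPow_two_gaussianReal,
    ENNReal.ofReal_rpow_of_nonneg (by positivity) (by norm_num)]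
  exact congrArg ENNReal.ofReal (Real.sqrt_eq_rpow _).symm

lemma sqrt_geodesic_variance {σ₀ : ℝ} (σ₁ : ℝ) (hσ₀ : 0 < σ₀) {t : ℝ}
    (ht₀ : 0 ≤ t) (ht₁ : t ≤ 1) :
    √((1 + t * (√(σ₁ / σ₀) - 1)) ^ 2 * σ₀) = (1 - t) * √σ₀ + t * √σ₁ := by
  have hscale : √(σ₁ / σ₀) * √σ₀ = √σ₁ := by
    rw [sqrt_div' _ hσ₀.le, div_mul_cancel₀ _ (sqrt_pos.2 hσ₀).ne']
  have hfactor : 0 ≤ 1 + t * (√(σ₁ / σ₀) - 1) := by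
    nlinarith [sqrt_nonneg (σ₁ / σ₀)]
  rw [sqrt_mul (sq_nonneg _), sqrt_sq hfactor]
  linear_combination t * hscale

theorem gaussian_constant_speed_general (m0 m1 : ℝ) (σ0 σ1 : ℝ≥0) (h0 : 0 < σ0)
    (μ : ℝ → Measure ℝ)
    (hμ : ∀ t, μ t = gaussianReal ((1 - t) * m0 + t * m1)
      (Real.toNNReal ((1 + t * (Real.sqrt ((σ1 : ℝ) / (σ0 : ℝ)) - 1)) ^ 2 * (σ0 : ℝ))))
    (s t : ℝ) (hs : 0 ≤ s) (hst : s ≤ t) (ht : t ≤ 1) :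
    wasserstein 2 (μ s) (μ t) =
      ENNReal.ofReal (t - s) * wasserstein 2 (gaussianReal m0 σ0) (gaussianReal m1 σ1) ∧
    wassersteinPow 2 (μ s) (μ t) =
      ENNReal.ofReal ((t - s) ^ 2 *
        ((m0 - m1) ^ 2 + (Real.sqrt σ0 - Real.sqrt σ1) ^ 2)) := by
  have hsqrt : ∀ τ, 0 ≤ τ → τ ≤ 1 →
      √((((1 + τ * (√((σ1 : ℝ) / σ0) - 1)) ^ 2 * σ0).toNNReal : ℝ)) =
        (1 - τ) * √(σ0 : ℝ) + τ * √(σ1 : ℝ) := fun τ hτ₀ hτ₁ ↦ by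
    rw [Real.coe_toNNReal _ (by positivity),
      sqrt_geodesic_variance _ (by exact_mod_cast h0) hτ₀ hτ₁]
  have hWpow : wassersteinPow 2 (μ s) (μ t) =
      ENNReal.ofReal ((t - s) ^ 2 * ((m0 - m1) ^ 2 + (√(σ0 : ℝ) - √(σ1 : ℝ)) ^ 2)) := by
    rw [hμ, hμ, wassersteinPow_two_gaussianReal, hsqrt s hs (hst.trans ht),
      hsqrt t (hs.trans hst) ht]
    congr 1
    ring
  refine ⟨?_, hWpow⟩
  rw [wasserstein, hWpow, wasserstein_two_gaussianReal,
    ENNReal.ofReal_rpow_of_nonneg (by positivity) (by norm_num),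
    ← ENNReal.ofReal_mul (sub_nonneg.2 hst), ← Real.sqrt_eq_rpow, sqrt_mul (sq_nonneg _),
    sqrt_sq (sub_nonneg.2 hst)]

/-- Gaussian constant-speed geodesic. -/
theorem gaussian_constant_speed (m0 m1 : ℝ) (σ0 σ1 : ℝ≥0) (h0 : 0 < σ0) (h1 : 0 < σ1)
    (μ : ℝ → Measure ℝ)
    (hμ : ∀ t, μ t = gaussianReal ((1 - t) * m0 + t * m1)
      (Real.toNNReal ((1 + t * (Real.sqrt ((σ1 : ℝ) / (σ0 : ℝ)) - 1)) ^ 2 * (σ0 : ℝ))))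
    (s t : ℝ) (hs : 0 ≤ s) (hst : s ≤ t) (ht : t ≤ 1) :
    wasserstein 2 (μ s) (μ t) =
      ENNReal.ofReal (t - s) * wasserstein 2 (gaussianReal m0 σ0) (gaussianReal m1 σ1) ∧
    wassersteinPow 2 (μ s) (μ t) =
      ENNReal.ofReal ((t - s) ^ 2 *
        ((m0 - m1) ^ 2 + (Real.sqrt σ0 - Real.sqrt σ1) ^ 2)) :=
  gaussian_constant_speed_general m0 m1 σ0 σ1 h0 μ hμ s t hs hst ht
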